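/- arXiv:2511.07846 — 4 statements merged into one kernel-verified Lean document; each statement's English description precedes it below -/
import Mathlib

section
/- For any integers n ≥ 1 and ℓ with 0 ≤ ℓ ≤ n-2, the Fourier coefficient of the one-dimensional Jackson kernel satisfies Ĵ_n(ℓ) = α_n (C(2n+1-ℓ, 3) - 4·C(n+1-ℓ, 3)); for n-1 ≤ ℓ ≤ 2n-2 it equals α_n C(2n+1-ℓ, 3); and it equals 0 for ℓ ≥ 2n-1. Here C(m,3) denotes the binomial coefficient. -/
open MeasureTheory Real

noncomputable def jacksonConst (n : ℕ) : ℝ := 3 / (n * (2 * n ^ 2 + 1))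

noncomputable def jackson (n : ℕ) (x : ℝ) : ℝ :=
  if Real.sin (Real.pi * x) = 0 then jacksonConst n * n ^ 4
  else jacksonConst n * (Real.sin (Real.pi * n * x)) ^ 4 / (Real.sin (Real.pi * x)) ^ 4

/-- The `ℓ`-th Fourier coefficient of the one-dimensional Jackson kernel. -/
noncomputable def jacksonHat (n : ℕ) (ℓ : ℤ) : ℂ :=
  ∫ x in Set.Ico (0:ℝ) 1,
    (jackson n x : ℂ) * Complex.exp (2 * Real.pi * Complex.I * (ℓ : ℂ) * (x : ℂ))

open Finset

private lemma jk_sum_ite_le {R K : ℕ} (h : K < R) (g : ℕ → ℕ) :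
    ∑ c ∈ range R, (if c ≤ K then g c else 0) = ∑ t ∈ range (K + 1), g t := by
  rw [← Finset.sum_subset (Finset.range_subset_range.2 (Nat.succ_le_of_lt h))
      (fun x _ hx => if_neg (by simp only [Finset.mem_range] at hx; omega))]
  exact Finset.sum_congr rfl fun c hc => if_pos (by simp only [Finset.mem_range] at hc; omega)

private lemma jk_cnt1 {R m : ℕ} (h : m < R) (s : ℕ) :
    (∑ d ∈ range R, if s + d = m then 1 else 0) = if s ≤ m then 1 else 0 := by
  rcases le_or_gt s m with hs | hs
  · rw [if_pos hs, Finset.sum_congr rfl (fun d _ => if_congr (by omega) rfl rfl : ∀ d ∈ range R,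
      (if s + d = m then 1 else 0) = if d = m - s then 1 else 0),
      Finset.sum_ite_eq' (range R) (m - s) (fun _ => 1), if_pos (Finset.mem_range.2 (by omega))]
  · rw [if_neg (by omega)]
    exact Finset.sum_eq_zero fun d _ => if_neg (by omega)

private lemma jk_cnt2 {R1 R2 m : ℕ} (h1 : m < R1) (h2 : m < R2) (s : ℕ) :
    (∑ c ∈ range R1, ∑ d ∈ range R2, if s + c + d = m then 1 else 0)
      = if s ≤ m then (m - s) + 1 else 0 := by
  rw [Finset.sum_congr rfl (fun c _ => jk_cnt1 h2 (s + c))]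
  rcases le_or_gt s m with hs | hs
  · rw [if_pos hs, Finset.sum_congr rfl (fun c _ => if_congr (by omega) rfl rfl : ∀ c ∈ range R1,
      (if s + c ≤ m then 1 else 0) = if c ≤ m - s then (fun _ => 1) c else 0),
      jk_sum_ite_le (by omega) (fun _ => 1)]
    simp
  · rw [if_neg (by omega)]
    exact Finset.sum_eq_zero fun c _ => if_neg (by omega)

private lemma jk_sum_desc (N : ℕ) (k : ℕ) :
    ∑ t ∈ range (N + 1), (N - t + k).choose k = (N + k + 1).choose (k + 1) := by
  have h := Finset.sum_range_reflect (fun j => (j + k).choose k) (N + 1)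
  simp only [Nat.add_sub_cancel] at h
  rw [h, Nat.sum_range_add_choose]

private lemma jk_cnt3 {R1 R2 R3 m : ℕ} (h1 : m < R1) (h2 : m < R2) (h3 : m < R3) (s : ℕ) :
    (∑ b ∈ range R1, ∑ c ∈ range R2, ∑ d ∈ range R3, if s + b + c + d = m then 1 else 0)
      = if s ≤ m then (m - s + 2).choose 2 else 0 := by
  rw [Finset.sum_congr rfl (fun b _ => jk_cnt2 h2 h3 (s + b))]
  rcases le_or_gt s m with hs | hs
  · have hcg : ∀ b ∈ range R1, (if s + b ≤ m then (m - (s + b)) + 1 else 0)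
        = if b ≤ m - s then (fun t => (m - s - t) + 1) b else 0 := by
      intro b _
      rcases le_or_gt (s + b) m with h | h
      · rw [if_pos h, if_pos (by omega)]; simp only; omega
      · rw [if_neg (by omega), if_neg (by omega)]
    rw [if_pos hs, Finset.sum_congr rfl hcg,
      jk_sum_ite_le (by omega) (fun t => (m - s - t) + 1)]
    have h1' := jk_sum_desc (m - s) 1
    simp only [Nat.choose_one_right] at h1'
    rw [show (m - s + 2) = (m - s) + 1 + 1 by omega, ← h1']
  · rw [if_neg (by omega)]
    exact Finset.sum_eq_zero fun b _ => if_neg (by omega)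

private lemma jk_cnt4 {R1 R2 R3 R4 m : ℕ} (h1 : m < R1) (h2 : m < R2) (h3 : m < R3)
    (h4 : m < R4) :
    (∑ a ∈ range R1, ∑ b ∈ range R2, ∑ c ∈ range R3, ∑ d ∈ range R4,
      if a + b + c + d = m then 1 else 0) = (m + 3).choose 3 := by
  rw [Finset.sum_congr rfl (fun a _ => jk_cnt3 h2 h3 h4 a),
    jk_sum_ite_le h1 (fun t => (m - t + 2).choose 2)]
  have h2' := jk_sum_desc m 2
  rw [show (m + 3).choose 3 = (m + 2 + 1).choose (2 + 1) by norm_num, ← h2']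

private def jkQ (A B C D m : ℕ) : ℕ :=
  ∑ a ∈ range A, ∑ b ∈ range B, ∑ c ∈ range C, ∑ d ∈ range D,
    if a + b + c + d = m then 1 else 0

private lemma jkQ_eq {A B C D m : ℕ} (h1 : m < A) (h2 : m < B) (h3 : m < C) (h4 : m < D) :
    jkQ A B C D m = (m + 3).choose 3 := jk_cnt4 h1 h2 h3 h4

private lemma jk_count_low {n m : ℕ} (h : m < n) :
    jkQ n n n n m = (m + 3).choose 3 := jkQ_eq h h h h

private lemma jk_split {R n : ℕ} (hn : n ≤ R) (f : ℕ → ℕ) :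
    ∑ a ∈ range R, f a = (∑ a ∈ range n, f a) + ∑ a ∈ range (R - n), f (n + a) := by
  rw [← Finset.sum_range_add_sum_Ico f hn, Finset.sum_Ico_eq_sum_range]

private lemma jk_count_high {n m : ℕ} (hn : n ≤ m) (hm : m + 2 ≤ 2 * n) :
    jkQ n n n n m + 4 * (m - n + 3).choose 3 = (m + 3).choose 3 := by
  set R := m + 1 with hR
  have hnR : n ≤ R := by omega
  have e1 : jkQ R R R R m = jkQ n R R R m + (m - n + 3).choose 3 := by
    unfold jkQ
    rw [jk_split hnR (fun a => ∑ b ∈ range R, ∑ c ∈ range R, ∑ d ∈ range R,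
      if a + b + c + d = m then 1 else 0)]
    congr 1
    rw [Finset.sum_congr rfl (fun a _ => Finset.sum_congr rfl fun b _ =>
      Finset.sum_congr rfl fun c _ => Finset.sum_congr rfl fun d _ =>
        (if_congr (by omega) rfl rfl :
          (if (n + a) + b + c + d = m then 1 else 0) = if a + b + c + d = m - n then 1 else 0))]
    exact jk_cnt4 (by omega) (by omega) (by omega) (by omega)
  have e2 : jkQ n R R R m = jkQ n n R R m + (m - n + 3).choose 3 := by
    unfold jkQ
    have key : ∀ a ∈ range n, (∑ b ∈ range R, ∑ c ∈ range R, ∑ d ∈ range R,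
        if a + b + c + d = m then 1 else 0)
        = (∑ b ∈ range n, ∑ c ∈ range R, ∑ d ∈ range R, if a + b + c + d = m then 1 else 0)
          + ∑ b ∈ range (R - n), ∑ c ∈ range R, ∑ d ∈ range R,
              if a + b + c + d = m - n then 1 else 0 := by
      intro a _
      rw [jk_split hnR (fun b => ∑ c ∈ range R, ∑ d ∈ range R,
        if a + b + c + d = m then 1 else 0)]
      congr 1
      exact Finset.sum_congr rfl fun b _ => Finset.sum_congr rfl fun c _ =>
        Finset.sum_congr rfl fun d _ => if_congr (by omega) rfl rfl
    rw [Finset.sum_congr rfl key, Finset.sum_add_distrib]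
    congr 1
    exact jk_cnt4 (by omega) (by omega) (by omega) (by omega)
  have e3 : jkQ n n R R m = jkQ n n n R m + (m - n + 3).choose 3 := by
    unfold jkQ
    have key : ∀ a ∈ range n, (∑ b ∈ range n, ∑ c ∈ range R, ∑ d ∈ range R,
        if a + b + c + d = m then 1 else 0)
        = (∑ b ∈ range n, ∑ c ∈ range n, ∑ d ∈ range R, if a + b + c + d = m then 1 else 0)
          + ∑ b ∈ range n, ∑ c ∈ range (R - n), ∑ d ∈ range R,
              if a + b + c + d = m - n then 1 else 0 := by
      intro a _
      have inner : ∀ b ∈ range n, (∑ c ∈ range R, ∑ d ∈ range R,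
          if a + b + c + d = m then 1 else 0)
          = (∑ c ∈ range n, ∑ d ∈ range R, if a + b + c + d = m then 1 else 0)
            + ∑ c ∈ range (R - n), ∑ d ∈ range R, if a + b + c + d = m - n then 1 else 0 := by
        intro b _
        rw [jk_split hnR (fun c => ∑ d ∈ range R, if a + b + c + d = m then 1 else 0)]
        congr 1
        exact Finset.sum_congr rfl fun c _ =>
          Finset.sum_congr rfl fun d _ => if_congr (by omega) rfl rfl
      rw [Finset.sum_congr rfl inner, Finset.sum_add_distrib]
    rw [Finset.sum_congr rfl key, Finset.sum_add_distrib]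
    congr 1
    exact jk_cnt4 (by omega) (by omega) (by omega) (by omega)
  have e4 : jkQ n n n R m = jkQ n n n n m + (m - n + 3).choose 3 := by
    unfold jkQ
    have key : ∀ a ∈ range n, (∑ b ∈ range n, ∑ c ∈ range n, ∑ d ∈ range R,
        if a + b + c + d = m then 1 else 0)
        = (∑ b ∈ range n, ∑ c ∈ range n, ∑ d ∈ range n, if a + b + c + d = m then 1 else 0)
          + ∑ b ∈ range n, ∑ c ∈ range n, ∑ d ∈ range (R - n),
              if a + b + c + d = m - n then 1 else 0 := by
      intro a _
      have inner : ∀ b ∈ range n, (∑ c ∈ range n, ∑ d ∈ range R,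
          if a + b + c + d = m then 1 else 0)
          = (∑ c ∈ range n, ∑ d ∈ range n, if a + b + c + d = m then 1 else 0)
            + ∑ c ∈ range n, ∑ d ∈ range (R - n), if a + b + c + d = m - n then 1 else 0 := by
        intro b _
        have inner2 : ∀ c ∈ range n, (∑ d ∈ range R, if a + b + c + d = m then 1 else 0)
            = (∑ d ∈ range n, if a + b + c + d = m then 1 else 0)
              + ∑ d ∈ range (R - n), if a + b + c + d = m - n then 1 else 0 := by
          intro c _
          rw [jk_split hnR (fun d => if a + b + c + d = m then 1 else 0)]
          congr 1
          exact Finset.sum_congr rfl fun d _ => if_congr (by omega) rfl rfl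
        rw [Finset.sum_congr rfl inner2, Finset.sum_add_distrib]
      rw [Finset.sum_congr rfl inner, Finset.sum_add_distrib]
    rw [Finset.sum_congr rfl key, Finset.sum_add_distrib]
    congr 1
    exact jk_cnt4 (by omega) (by omega) (by omega) (by omega)
  have e0 : jkQ R R R R m = (m + 3).choose 3 := jkQ_eq (by omega) (by omega) (by omega) (by omega)
  omega


private lemma jk_key (n : ℕ) (x : ℝ) :
    (Real.sin (Real.pi * n * x) : ℂ) * Complex.exp ((Real.pi : ℂ) * Complex.I * x) ^ n
      = (Real.sin (Real.pi * x) : ℂ) * Complex.exp ((Real.pi : ℂ) * Complex.I * x)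
          * ∑ j ∈ range n, (Complex.exp ((Real.pi : ℂ) * Complex.I * x) ^ 2) ^ j := by
  set u : ℂ := Complex.exp ((Real.pi : ℂ) * Complex.I * x) with hu
  have hune : u ≠ 0 := Complex.exp_ne_zero _
  have husin : (Real.sin (Real.pi * x) : ℂ) = (u⁻¹ - u) * Complex.I / 2 := by
    have e1 : Complex.exp (-((Real.pi * x : ℝ) : ℂ) * Complex.I) = u⁻¹ := by
      rw [hu, ← Complex.exp_neg]; congr 1; push_cast; ring
    have e2 : Complex.exp (((Real.pi * x : ℝ) : ℂ) * Complex.I) = u := by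
      rw [hu]; congr 1; push_cast; ring
    rw [Complex.ofReal_sin, Complex.sin, e1, e2]
  have hnsin : (Real.sin (Real.pi * n * x) : ℂ) = ((u ^ n)⁻¹ - u ^ n) * Complex.I / 2 := by
    have e1 : Complex.exp (-((Real.pi * n * x : ℝ) : ℂ) * Complex.I) = (u ^ n)⁻¹ := by
      rw [hu, ← Complex.exp_nat_mul, ← Complex.exp_neg]; congr 1; push_cast; ring
    have e2 : Complex.exp (((Real.pi * n * x : ℝ) : ℂ) * Complex.I) = u ^ n := by
      rw [hu, ← Complex.exp_nat_mul]; congr 1; push_cast; ring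
    rw [Complex.ofReal_sin, Complex.sin, e1, e2]
  rw [husin, hnsin]
  have h1 : u⁻¹ * u = 1 := inv_mul_cancel₀ hune
  have h1n : (u ^ n)⁻¹ * u ^ n = 1 := inv_mul_cancel₀ (pow_ne_zero _ hune)
  have hg := geom_sum_mul (u ^ 2) n
  linear_combination (Complex.I / 2) * h1n
    - (Complex.I / 2) * (∑ j ∈ range n, (u ^ 2) ^ j) * h1 + (Complex.I / 2) * hg

private lemma jk_integral_exp (k : ℤ) :
    (∫ x in Set.Ico (0:ℝ) 1, Complex.exp (2 * (Real.pi : ℂ) * Complex.I * (k : ℂ) * x))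
      = if k = 0 then 1 else 0 := by
  rcases eq_or_ne k 0 with hk | hk
  · subst hk
    simp [Real.volume_Ico]
  · have hc : 2 * (Real.pi : ℂ) * Complex.I * (k : ℂ) ≠ 0 := by
      apply mul_ne_zero (mul_ne_zero (mul_ne_zero two_ne_zero
        (Complex.ofReal_ne_zero.2 Real.pi_ne_zero)) Complex.I_ne_zero)
      exact_mod_cast hk
    rw [if_neg hk, MeasureTheory.integral_Ico_eq_integral_Ioo,
      ← MeasureTheory.integral_Ioc_eq_integral_Ioo,
      ← intervalIntegral.integral_of_le (by norm_num : (0:ℝ) ≤ 1),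
      integral_exp_mul_complex hc]
    have h1 : Complex.exp (2 * (Real.pi : ℂ) * Complex.I * (k : ℂ) * (1:ℝ)) = 1 := by
      rw [show 2 * (Real.pi : ℂ) * Complex.I * (k : ℂ) * ((1:ℝ):ℂ)
          = (k : ℂ) * (2 * (Real.pi : ℂ) * Complex.I) by push_cast; ring]
      exact Complex.exp_int_mul_two_pi_mul_I k
    rw [h1, show ((0:ℝ):ℂ) = 0 by norm_num, mul_zero, Complex.exp_zero, sub_self, zero_div]

private lemma jk_pointwise (n : ℕ) (hn : 1 ≤ n) (ℓ : ℤ) :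
    Set.EqOn
      (fun x : ℝ => (jackson n x : ℂ) *
        Complex.exp (2 * (Real.pi : ℂ) * Complex.I * (ℓ : ℂ) * (x : ℂ)))
      (fun x : ℝ => (jacksonConst n : ℂ) *
        ∑ a ∈ range n, ∑ b ∈ range n, ∑ c ∈ range n, ∑ d ∈ range n,
          Complex.exp (2 * (Real.pi : ℂ) * Complex.I *
            (((a : ℤ) + b + c + d - (2 * (n : ℤ) - 2) + ℓ : ℤ) : ℂ) * (x : ℂ)))
      (Set.Ico (0:ℝ) 1) := by
  intro x hx
  simp only
  by_cases hx0 : x = 0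
  · subst hx0
    simp only [Complex.ofReal_zero, mul_zero, Complex.exp_zero, mul_one, jackson,
      Real.sin_zero, if_pos rfl, Finset.sum_const, Finset.card_range, nsmul_eq_mul]
    push_cast
    ring
  · have hx1 : 0 < x := lt_of_le_of_ne hx.1 (Ne.symm hx0)
    have hsin : Real.sin (Real.pi * x) ≠ 0 :=
      ne_of_gt (Real.sin_pos_of_pos_of_lt_pi (by positivity)
        (by nlinarith [Real.pi_pos, hx.2]))
    rw [jackson, if_neg hsin]
    set u : ℂ := Complex.exp ((Real.pi : ℂ) * Complex.I * x) with hu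
    have hune : u ≠ 0 := Complex.exp_ne_zero _
    have h2 : Complex.exp (2 * (Real.pi : ℂ) * Complex.I * (x : ℂ)) = u ^ 2 := by
      rw [hu, sq, ← Complex.exp_add]; congr 1; ring
    have hp : ∀ k : ℕ, (u ^ 2) ^ k
        = Complex.exp ((k : ℂ) * (2 * (Real.pi : ℂ) * Complex.I * (x : ℂ))) := by
      intro k; rw [Complex.exp_nat_mul, h2]
    set L : ℂ := Complex.exp (2 * (Real.pi : ℂ) * Complex.I * (ℓ : ℂ) * (x : ℂ)) with hL
    have hterm : ∀ a b c d : ℕ,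
        Complex.exp (2 * (Real.pi : ℂ) * Complex.I *
            (((a : ℤ) + b + c + d - (2 * (n : ℤ) - 2) + ℓ : ℤ) : ℂ) * (x : ℂ))
        = (u ^ 2) ^ a * ((u ^ 2) ^ b * ((u ^ 2) ^ c * ((u ^ 2) ^ d *
            ((u ^ 2) ^ 2 * ((((u ^ 2) ^ (2 * n))⁻¹) * L))))) := by
      intro a b c d
      rw [hp a, hp b, hp c, hp d, hp 2, hp (2 * n), ← Complex.exp_neg, hL]
      simp only [← Complex.exp_add]
      congr 1
      push_cast
      ring
    simp only [hterm]
    simp only [← Finset.mul_sum]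
    simp only [← Finset.sum_mul]
    simp only [Complex.ofReal_div, Complex.ofReal_mul, Complex.ofReal_pow]
    set S : ℂ := ∑ j ∈ range n, (u ^ 2) ^ j with hS
    set A : ℂ := ((Real.sin (Real.pi * n * x) : ℝ) : ℂ) with hA
    set B : ℂ := ((Real.sin (Real.pi * x) : ℝ) : ℂ) with hB
    have hBne : B ≠ 0 := Complex.ofReal_ne_zero.2 hsin
    have h4 : (A * u ^ n) ^ 4 = (B * u * S) ^ 4 := by rw [jk_key n x]
    have hx4 : (u ^ 2) ^ (2 * n) = (u ^ n) ^ 4 := by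
      rw [← pow_mul, ← pow_mul, show 2 * (2 * n) = n * 4 by ring]
    rw [hx4]
    field_simp
    linear_combination ((jacksonConst n : ℂ) * L) * h4


private lemma jk_master (n : ℕ) (hn : 1 ≤ n) (ℓ : ℤ) :
    jacksonHat n ℓ = (jacksonConst n : ℂ) *
      ∑ a ∈ range n, ∑ b ∈ range n, ∑ c ∈ range n, ∑ d ∈ range n,
        (if (a : ℤ) + b + c + d - (2 * (n : ℤ) - 2) + ℓ = 0 then (1:ℂ) else 0) := by
  rw [jacksonHat, MeasureTheory.setIntegral_congr_fun measurableSet_Ico (jk_pointwise n hn ℓ),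
    MeasureTheory.integral_const_mul]
  congr 1
  have hint : ∀ k : ℤ, IntegrableOn (fun x : ℝ => Complex.exp
      (2 * (Real.pi : ℂ) * Complex.I * (k : ℂ) * (x : ℂ))) (Set.Ico (0:ℝ) 1) volume := by
    intro k
    apply (Continuous.integrableOn_Icc ?_).mono_set Set.Ico_subset_Icc_self
    exact Complex.continuous_exp.comp (continuous_const.mul Complex.continuous_ofReal)
  rw [MeasureTheory.integral_finset_sum _ (fun a _ => integrable_finset_sum _ fun b _ =>
    integrable_finset_sum _ fun c _ => integrable_finset_sum _ fun d _ => hint _)]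
  refine Finset.sum_congr rfl fun a _ => ?_
  rw [MeasureTheory.integral_finset_sum _ (fun b _ =>
    integrable_finset_sum _ fun c _ => integrable_finset_sum _ fun d _ => hint _)]
  refine Finset.sum_congr rfl fun b _ => ?_
  rw [MeasureTheory.integral_finset_sum _ (fun c _ => integrable_finset_sum _ fun d _ => hint _)]
  refine Finset.sum_congr rfl fun c _ => ?_
  rw [MeasureTheory.integral_finset_sum _ (fun d _ => hint _)]
  exact Finset.sum_congr rfl fun d _ => jk_integral_exp _

theorem jackson_fourier_formula (n : ℕ) (hn : 1 ≤ n) (ℓ : ℕ) :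
    ((ℓ : ℤ) ≤ (n : ℤ) - 2 →
      jacksonHat n ℓ = (jacksonConst n : ℂ) *
        (((2 * n + 1 - ℓ).choose 3 : ℂ) - 4 * ((n + 1 - ℓ).choose 3 : ℂ)))
    ∧ ((n : ℤ) - 1 ≤ (ℓ : ℤ) ∧ (ℓ : ℤ) ≤ 2 * (n : ℤ) - 2 →
      jacksonHat n ℓ = (jacksonConst n : ℂ) * ((2 * n + 1 - ℓ).choose 3 : ℂ))
    ∧ (2 * (n : ℤ) - 1 ≤ (ℓ : ℤ) → jacksonHat n ℓ = 0) := by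
  have hcast : ∀ h : (ℓ : ℤ) ≤ 2 * (n : ℤ) - 2,
      (∑ a ∈ range n, ∑ b ∈ range n, ∑ c ∈ range n, ∑ d ∈ range n,
        (if (a : ℤ) + b + c + d - (2 * (n : ℤ) - 2) + ℓ = 0 then (1:ℂ) else 0))
      = ((jkQ n n n n (2 * n - 2 - ℓ) : ℕ) : ℂ) := by
    intro h
    unfold jkQ
    push_cast
    refine Finset.sum_congr rfl fun a _ => Finset.sum_congr rfl fun b _ =>
      Finset.sum_congr rfl fun c _ => Finset.sum_congr rfl fun d _ => ?_
    rcases le_or_gt ((a:ℤ) + b + c + d - (2 * (n : ℤ) - 2) + ℓ) (-1) with hlt | hge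
    · rw [if_neg (by omega), if_neg (by omega)]
    · by_cases he : (a:ℤ) + b + c + d - (2 * (n : ℤ) - 2) + ℓ = 0
      · rw [if_pos he, if_pos (by omega)]
      · rw [if_neg he, if_neg (by omega)]
  refine ⟨?_, ?_, ?_⟩
  · intro h
    have h2 : (ℓ : ℤ) ≤ 2 * (n : ℤ) - 2 := by omega
    rw [jk_master n hn ℓ, hcast h2]
    have hcount := jk_count_high (n := n) (m := 2 * n - 2 - ℓ) (by omega) (by omega)
    have heq1 : 2 * n - 2 - ℓ - n + 3 = n + 1 - ℓ := by omega
    have heq2 : 2 * n - 2 - ℓ + 3 = 2 * n + 1 - ℓ := by omega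
    rw [heq1, heq2] at hcount
    have := congrArg (fun t : ℕ => (t : ℂ)) hcount
    push_cast at this
    congr 1
    linear_combination this
  · rintro ⟨h1, h2⟩
    rw [jk_master n hn ℓ, hcast h2]
    have hcount := jk_count_low (n := n) (m := 2 * n - 2 - ℓ) (by omega)
    have heq2 : 2 * n - 2 - ℓ + 3 = 2 * n + 1 - ℓ := by omega
    rw [heq2] at hcount
    rw [hcount]
  · intro h
    rw [jk_master n hn ℓ]
    have : (∑ a ∈ range n, ∑ b ∈ range n, ∑ c ∈ range n, ∑ d ∈ range n,
        (if (a : ℤ) + b + c + d - (2 * (n : ℤ) - 2) + ℓ = 0 then (1:ℂ) else 0)) = 0 := by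
      refine Finset.sum_eq_zero fun a _ => Finset.sum_eq_zero fun b _ =>
        Finset.sum_eq_zero fun c _ => Finset.sum_eq_zero fun d _ => if_neg (by omega)
    rw [this, mul_zero]
end

section
/- For any d, n ≥ 1, the d-dimensional Jackson kernel J_{d,n}(x) = ∏_{i=1}^d J_n(x_i) is L-Lipschitz on T^d (with respect to the toroidal metric) with L = 3πn²(3n/2)^{d-1}√d. -/
open MeasureTheory Real

noncomputable def dtor1 (a b : ℝ) : ℝ := min |a - b| (1 - |a - b|)

noncomputable def dtor {d : ℕ} (x y : Fin d → ℝ) : ℝ :=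
  Real.sqrt (∑ i, (dtor1 (x i) (y i)) ^ 2)

def torusSet (d : ℕ) : Set (Fin d → ℝ) := Set.univ.pi fun _ => Set.Ico (0:ℝ) 1

noncomputable def jacksonR (n : ℕ) (x : ℝ) : ℝ :=
  ∑ k ∈ Finset.range n, Real.cos (((n : ℝ) - 1 - 2 * k) * (Real.pi * x))

lemma sin_mul_jacksonR (n : ℕ) (x : ℝ) :
    Real.sin (Real.pi * x) * jacksonR n x = Real.sin (Real.pi * n * x) := by
  have key : ∀ k : ℕ,
      Real.sin (Real.pi * x) * Real.cos (((n : ℝ) - 1 - 2 * k) * (Real.pi * x))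
        = (fun k : ℕ => Real.sin (((n : ℝ) - 2 * k) * (Real.pi * x)) / 2) k
          - (fun k : ℕ => Real.sin (((n : ℝ) - 2 * k) * (Real.pi * x)) / 2) (k + 1) := by
    intro k
    simp only
    have e1 : ((n : ℝ) - 2 * k) * (Real.pi * x)
        = ((n : ℝ) - 1 - 2 * k) * (Real.pi * x) + Real.pi * x := by ring
    have e2 : ((n : ℝ) - 2 * ((k : ℕ) + 1 : ℕ)) * (Real.pi * x)
        = ((n : ℝ) - 1 - 2 * k) * (Real.pi * x) - Real.pi * x := by push_cast; ring
    rw [e1, e2, Real.sin_add, Real.sin_sub]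
    ring
  rw [jacksonR, Finset.mul_sum, Finset.sum_congr rfl fun k _ => key k,
    Finset.sum_range_sub']
  have a1 : ((n : ℝ) - 2 * ((0 : ℕ) : ℝ)) * (Real.pi * x) = Real.pi * n * x := by
    push_cast; ring
  have a2 : ((n : ℝ) - 2 * ((n : ℕ) : ℝ)) * (Real.pi * x) = -(Real.pi * n * x) := by
    push_cast; ring
  rw [a1, a2, Real.sin_neg]
  ring

lemma jackson_eq (n : ℕ) (x : ℝ) :
    jackson n x = jacksonConst n * (jacksonR n x) ^ 4 := by
  unfold jackson
  split_ifs with h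
  · rw [Real.sin_eq_zero_iff] at h
    obtain ⟨m, hm⟩ := h
    have hx : x = (m : ℝ) := by
      have hπ : (Real.pi : ℝ) ≠ 0 := Real.pi_ne_zero
      have := mul_left_cancel₀ hπ (by linarith [hm] : Real.pi * (m:ℝ) = Real.pi * x)
      exact this.symm
    rw [hx]
    suffices hsuf : (jacksonR n (m:ℝ)) ^ 4 = ((n:ℕ):ℝ) ^ 4 by rw [hsuf]
    have hterm : ∀ k ∈ Finset.range n,
        Real.cos (((n : ℝ) - 1 - 2 * k) * (Real.pi * (m : ℝ)))
          = Real.cos (((((n : ℤ) - 1) * m : ℤ) : ℝ) * Real.pi) := by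
      intro k _
      have e : ((n : ℝ) - 1 - 2 * k) * (Real.pi * (m : ℝ))
          = ((((n : ℤ) - 1) * m : ℤ) : ℝ) * Real.pi - (((k : ℤ) * m : ℤ) : ℝ) * (2 * Real.pi) := by
        push_cast; ring
      rw [e, Real.cos_sub_int_mul_two_pi]
    rw [jacksonR, Finset.sum_congr rfl hterm, Finset.sum_const, Finset.card_range,
      nsmul_eq_mul]
    have hc : Real.cos (((((n : ℤ) - 1) * m : ℤ) : ℝ) * Real.pi) ^ 2 = 1 := by
      have h2 := Real.sin_sq_add_cos_sq (((((n : ℤ) - 1) * m : ℤ) : ℝ) * Real.pi)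
      rw [Real.sin_int_mul_pi] at h2
      nlinarith [h2]
    have hre : (((n:ℕ):ℝ) * Real.cos (((((n : ℤ) - 1) * m : ℤ) : ℝ) * Real.pi)) ^ 4
        = ((n:ℕ):ℝ) ^ 4 * (Real.cos (((((n : ℤ) - 1) * m : ℤ) : ℝ) * Real.pi) ^ 2) ^ 2 := by
      ring
    rw [hre, hc]
    norm_num
  · have h4 : Real.sin (Real.pi * n * x) ^ 4
        = Real.sin (Real.pi * x) ^ 4 * (jacksonR n x) ^ 4 := by
      rw [← sin_mul_jacksonR]; ring
    rw [h4]
    field_simp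
lemma jacksonR_abs_le (n : ℕ) (x : ℝ) : |jacksonR n x| ≤ n := by
  refine (Finset.abs_sum_le_sum_abs _ _).trans ?_
  calc ∑ k ∈ Finset.range n, |Real.cos (((n : ℝ) - 1 - 2 * k) * (Real.pi * x))|
      ≤ ∑ _k ∈ Finset.range n, (1 : ℝ) :=
        Finset.sum_le_sum fun k _ => Real.abs_cos_le_one _
    _ = n := by simp

lemma abs_cos_sub_cos_le (a b : ℝ) : |Real.cos a - Real.cos b| ≤ |a - b| := by
  rw [Real.cos_sub_cos]
  have h1 : |Real.sin ((a + b) / 2)| ≤ 1 := Real.abs_sin_le_one _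
  have h2 : |Real.sin ((a - b) / 2)| ≤ |(a - b) / 2| := Real.abs_sin_le_abs
  rw [abs_mul, abs_mul]
  have h3 : |(-2 : ℝ)| = 2 := by norm_num
  rw [h3]
  calc 2 * |Real.sin ((a + b) / 2)| * |Real.sin ((a - b) / 2)|
      ≤ 2 * 1 * |(a - b) / 2| := by
        apply mul_le_mul _ h2 (abs_nonneg _) (by norm_num)
        nlinarith [abs_nonneg (Real.sin ((a + b) / 2))]
    _ = |a - b| := by rw [abs_div, abs_two]; ring

lemma sum_abs_coef_le (n : ℕ) :
    (∑ k ∈ Finset.range n, |(n : ℝ) - 1 - 2 * k|) ≤ (n : ℝ) ^ 2 / 2 := by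
  induction n using Nat.strong_induction_on with
  | _ n ih =>
    match n with
    | 0 => simp
    | 1 => norm_num
    | (m + 2) =>
      have ihm := ih m (by omega)
      rw [Finset.sum_range_succ', Finset.sum_range_succ]
      have hm0 : (0:ℝ) ≤ (m:ℝ) := Nat.cast_nonneg m
      have h0 : |((m + 2 : ℕ) : ℝ) - 1 - 2 * ((0 : ℕ) : ℝ)| ≤ (m : ℝ) + 1 := by
        rw [abs_le]; push_cast; constructor <;> nlinarith
      have hlast : |((m + 2 : ℕ) : ℝ) - 1 - 2 * (((m : ℕ) + 1 : ℕ) : ℝ)| ≤ (m : ℝ) + 1 := by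
        rw [abs_le]; push_cast; constructor <;> nlinarith
      have hmid : (∑ k ∈ Finset.range m, |((m + 2 : ℕ) : ℝ) - 1 - 2 * ((k + 1 : ℕ) : ℝ)|)
          = ∑ k ∈ Finset.range m, |(m : ℝ) - 1 - 2 * (k : ℝ)| := by
        refine Finset.sum_congr rfl fun k _ => ?_
        congr 1
        push_cast; ring
      have hfin : ((m + 2 : ℕ) : ℝ) ^ 2 / 2 = (m : ℝ) ^ 2 / 2 + ((m : ℝ) + 1) + ((m : ℝ) + 1) := by
        push_cast; ring
      rw [hfin]
      exact add_le_add (add_le_add (le_of_eq hmid |>.trans ihm) hlast) h0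
lemma jacksonR_lip (n : ℕ) (x y : ℝ) :
    |jacksonR n x - jacksonR n y| ≤ (n : ℝ) ^ 2 / 2 * (Real.pi * |x - y|) := by
  rw [jacksonR, jacksonR, ← Finset.sum_sub_distrib]
  refine (Finset.abs_sum_le_sum_abs _ _).trans ?_
  have hterm : ∀ k ∈ Finset.range n,
      |Real.cos (((n : ℝ) - 1 - 2 * k) * (Real.pi * x))
        - Real.cos (((n : ℝ) - 1 - 2 * k) * (Real.pi * y))|
      ≤ |(n : ℝ) - 1 - 2 * k| * (Real.pi * |x - y|) := by
    intro k _
    refine (_root_.abs_cos_sub_cos_le _ _).trans ?_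
    rw [← mul_sub, abs_mul, ← mul_sub, abs_mul, abs_of_pos Real.pi_pos]
  refine (Finset.sum_le_sum hterm).trans ?_
  rw [← Finset.sum_mul]
  have hπ : 0 ≤ Real.pi * |x - y| := by positivity
  exact mul_le_mul_of_nonneg_right (sum_abs_coef_le n) hπ

lemma jackson_lip1 (n : ℕ) (hn : 1 ≤ n) (x y : ℝ) :
    |jackson n x - jackson n y| ≤ 3 * Real.pi * (n : ℝ) ^ 2 * |x - y| := by
  rw [jackson_eq, jackson_eq, ← mul_sub, abs_mul]
  have hnR : (0:ℝ) < n := by exact_mod_cast hn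
  have hden : (0:ℝ) < (n : ℝ) * (2 * (n : ℝ) ^ 2 + 1) := by positivity
  have hα : |jacksonConst n| = 3 / ((n : ℝ) * (2 * (n : ℝ) ^ 2 + 1)) := by
    rw [jacksonConst, abs_of_pos (by positivity)]
  set a := jacksonR n x with ha
  set b := jacksonR n y with hb
  have hax : |a| ≤ n := jacksonR_abs_le n x
  have hbx : |b| ≤ n := jacksonR_abs_le n y
  have hfac : |a ^ 4 - b ^ 4| ≤ |a - b| * (4 * (n : ℝ) ^ 3) := by
    have he : a ^ 4 - b ^ 4 = (a - b) * (a ^ 3 + a ^ 2 * b + a * b ^ 2 + b ^ 3) := by ring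
    rw [he, abs_mul]
    refine mul_le_mul_of_nonneg_left ?_ (abs_nonneg _)
    have h1 : |a ^ 3| ≤ (n : ℝ) ^ 3 := by
      rw [abs_pow]; exact pow_le_pow_left₀ (abs_nonneg _) hax 3
    have h2 : |a ^ 2 * b| ≤ (n : ℝ) ^ 3 := by
      rw [abs_mul, abs_pow]
      calc |a| ^ 2 * |b| ≤ (n : ℝ) ^ 2 * (n : ℝ) :=
        mul_le_mul (pow_le_pow_left₀ (abs_nonneg _) hax 2) hbx (abs_nonneg _) (by positivity)
      _ = (n : ℝ) ^ 3 := by ring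
    have h3 : |a * b ^ 2| ≤ (n : ℝ) ^ 3 := by
      rw [abs_mul, abs_pow]
      calc |a| * |b| ^ 2 ≤ (n : ℝ) * (n : ℝ) ^ 2 :=
        mul_le_mul hax (pow_le_pow_left₀ (abs_nonneg _) hbx 2) (by positivity) (by positivity)
      _ = (n : ℝ) ^ 3 := by ring
    have h4 : |b ^ 3| ≤ (n : ℝ) ^ 3 := by
      rw [abs_pow]; exact pow_le_pow_left₀ (abs_nonneg _) hbx 3
    calc |a ^ 3 + a ^ 2 * b + a * b ^ 2 + b ^ 3|
        ≤ |a ^ 3 + a ^ 2 * b + a * b ^ 2| + |b ^ 3| := abs_add_le _ _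
      _ ≤ (|a ^ 3 + a ^ 2 * b| + |a * b ^ 2|) + |b ^ 3| := by
          linarith [abs_add_le (a ^ 3 + a ^ 2 * b) (a * b ^ 2)]
      _ ≤ ((|a ^ 3| + |a ^ 2 * b|) + |a * b ^ 2|) + |b ^ 3| := by
          linarith [abs_add_le (a ^ 3) (a ^ 2 * b)]
      _ ≤ 4 * (n : ℝ) ^ 3 := by linarith
  have hR := jacksonR_lip n x y
  have hchain : |a ^ 4 - b ^ 4| ≤ 4 * (n : ℝ) ^ 3 * ((n : ℝ) ^ 2 / 2 * (Real.pi * |x - y|)) := by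
    calc |a ^ 4 - b ^ 4| ≤ |a - b| * (4 * (n : ℝ) ^ 3) := hfac
      _ ≤ (n : ℝ) ^ 2 / 2 * (Real.pi * |x - y|) * (4 * (n : ℝ) ^ 3) := by
          exact mul_le_mul_of_nonneg_right hR (by positivity)
      _ = 4 * (n : ℝ) ^ 3 * ((n : ℝ) ^ 2 / 2 * (Real.pi * |x - y|)) := by ring
  rw [hα]
  calc 3 / ((n : ℝ) * (2 * (n : ℝ) ^ 2 + 1)) * |a ^ 4 - b ^ 4|
      ≤ 3 / ((n : ℝ) * (2 * (n : ℝ) ^ 2 + 1))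
          * (4 * (n : ℝ) ^ 3 * ((n : ℝ) ^ 2 / 2 * (Real.pi * |x - y|))) :=
        mul_le_mul_of_nonneg_left hchain (by positivity)
    _ = 6 * (n : ℝ) ^ 5 / ((n : ℝ) * (2 * (n : ℝ) ^ 2 + 1)) * (Real.pi * |x - y|) := by
        field_simp; ring
    _ ≤ 3 * (n : ℝ) ^ 2 * (Real.pi * |x - y|) := by
        have hb : 6 * (n : ℝ) ^ 5 / ((n : ℝ) * (2 * (n : ℝ) ^ 2 + 1)) ≤ 3 * (n : ℝ) ^ 2 := by
          rw [div_le_iff₀ hden]; nlinarith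
        exact mul_le_mul_of_nonneg_right hb (by positivity)
    _ = 3 * Real.pi * (n : ℝ) ^ 2 * |x - y| := by ring
lemma jacksonR_add_one (n : ℕ) (x : ℝ) :
    jacksonR n (x + 1) = (-1 : ℝ) ^ ((n : ℤ) - 1) * jacksonR n x := by
  rw [jacksonR, jacksonR, Finset.mul_sum]
  refine Finset.sum_congr rfl fun k _ => ?_
  have e : ((n : ℝ) - 1 - 2 * k) * (Real.pi * (x + 1))
      = (((n : ℝ) - 1 - 2 * k) * (Real.pi * x) + (((n : ℤ) - 1 : ℤ) : ℝ) * Real.pi)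
        - ((k : ℤ) : ℝ) * (2 * Real.pi) := by
    push_cast; ring
  rw [e, Real.cos_sub_int_mul_two_pi, Real.cos_add_int_mul_pi]

lemma neg_one_zpow_sq (j : ℤ) : ((-1 : ℝ) ^ j) ^ 2 = 1 := by
  rcases Int.even_or_odd j with h | h
  · rw [h.neg_one_zpow]; norm_num
  · rw [h.neg_one_zpow]; norm_num

lemma jackson_add_one (n : ℕ) (x : ℝ) : jackson n (x + 1) = jackson n x := by
  rw [jackson_eq, jackson_eq, jacksonR_add_one]
  have : ((-1 : ℝ) ^ ((n : ℤ) - 1) * jacksonR n x) ^ 4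
      = (((-1 : ℝ) ^ ((n : ℤ) - 1)) ^ 2) ^ 2 * jacksonR n x ^ 4 := by ring
  rw [this, neg_one_zpow_sq]
  ring

lemma jackson_abs_le (n : ℕ) (hn : 1 ≤ n) (x : ℝ) : |jackson n x| ≤ 3 * n / 2 := by
  have hnR : (0:ℝ) < n := by exact_mod_cast hn
  have hden : (0:ℝ) < (n : ℝ) * (2 * (n : ℝ) ^ 2 + 1) := by positivity
  rw [jackson_eq, abs_mul, abs_pow]
  have hα : |jacksonConst n| = 3 / ((n : ℝ) * (2 * (n : ℝ) ^ 2 + 1)) := by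
    rw [jacksonConst, abs_of_pos (by positivity)]
  have hR : |jacksonR n x| ^ 4 ≤ (n : ℝ) ^ 4 :=
    pow_le_pow_left₀ (abs_nonneg _) (jacksonR_abs_le n x) 4
  rw [hα]
  calc 3 / ((n : ℝ) * (2 * (n : ℝ) ^ 2 + 1)) * |jacksonR n x| ^ 4
      ≤ 3 / ((n : ℝ) * (2 * (n : ℝ) ^ 2 + 1)) * (n : ℝ) ^ 4 :=
        mul_le_mul_of_nonneg_left hR (by positivity)
    _ ≤ 3 * n / 2 := by
        rw [div_mul_eq_mul_div, div_le_div_iff₀ hden (by norm_num)]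
        nlinarith

lemma jackson_lip_tor_aux (n : ℕ) (hn : 1 ≤ n) (x y : ℝ)
    (hx0 : 0 ≤ x) (hy1 : y < 1) (hxy : x ≤ y) :
    |jackson n x - jackson n y| ≤ 3 * Real.pi * (n : ℝ) ^ 2 * (1 - |x - y|) := by
  have h1 : |x + 1 - y| = 1 - |x - y| := by
    rw [abs_of_nonneg (by linarith), abs_of_nonpos (by linarith)]
    ring
  calc |jackson n x - jackson n y| = |jackson n (x + 1) - jackson n y| := by
        rw [jackson_add_one]
    _ ≤ 3 * Real.pi * (n : ℝ) ^ 2 * |x + 1 - y| := jackson_lip1 n hn (x + 1) y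
    _ = 3 * Real.pi * (n : ℝ) ^ 2 * (1 - |x - y|) := by rw [h1]

lemma jackson_lip_tor (n : ℕ) (hn : 1 ≤ n) (x y : ℝ)
    (hx : x ∈ Set.Ico (0:ℝ) 1) (hy : y ∈ Set.Ico (0:ℝ) 1) :
    |jackson n x - jackson n y| ≤ 3 * Real.pi * (n : ℝ) ^ 2 * dtor1 x y := by
  rw [dtor1]
  rcases le_total |x - y| (1 - |x - y|) with h | h
  · rw [min_eq_left h]; exact jackson_lip1 n hn x y
  · rw [min_eq_right h]
    rcases le_total x y with hxy | hxy
    · exact jackson_lip_tor_aux n hn x y hx.1 hy.2 hxy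
    · rw [abs_sub_comm (jackson n x), abs_sub_comm x y]
      exact jackson_lip_tor_aux n hn y x hy.1 hx.2 hxy
lemma abs_prod_sub_prod_le {ι : Type*} [DecidableEq ι] (s : Finset ι) (f g : ι → ℝ)
    (B : ℝ) (hB : 1 ≤ B) (hf : ∀ i, |f i| ≤ B) (hg : ∀ i, |g i| ≤ B) :
    |∏ i ∈ s, f i - ∏ i ∈ s, g i| ≤ B ^ (s.card - 1) * ∑ i ∈ s, |f i - g i| := by
  induction s using Finset.induction with
  | empty => simp
  | insert _ _ ha ih =>
    rename_i a s
    rw [Finset.prod_insert ha, Finset.prod_insert ha, Finset.sum_insert ha,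
      Finset.card_insert_of_notMem ha, Nat.add_sub_cancel]
    have hB0 : (0:ℝ) ≤ B := le_trans zero_le_one hB
    have hprodf : |∏ i ∈ s, f i| ≤ B ^ s.card := by
      rw [Finset.abs_prod]
      calc ∏ i ∈ s, |f i| ≤ ∏ _i ∈ s, B :=
            Finset.prod_le_prod (fun i _ => abs_nonneg _) (fun i _ => hf i)
        _ = B ^ s.card := Finset.prod_const B
    have key : f a * ∏ i ∈ s, f i - g a * ∏ i ∈ s, g i
        = (f a - g a) * ∏ i ∈ s, f i + g a * (∏ i ∈ s, f i - ∏ i ∈ s, g i) := by ring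
    rw [key]
    calc |(f a - g a) * ∏ i ∈ s, f i + g a * (∏ i ∈ s, f i - ∏ i ∈ s, g i)|
        ≤ |(f a - g a) * ∏ i ∈ s, f i| + |g a * (∏ i ∈ s, f i - ∏ i ∈ s, g i)| := abs_add_le _ _
      _ = |f a - g a| * |∏ i ∈ s, f i| + |g a| * |∏ i ∈ s, f i - ∏ i ∈ s, g i| := by
          rw [abs_mul, abs_mul]
      _ ≤ |f a - g a| * B ^ s.card
          + B * (B ^ (s.card - 1) * ∑ i ∈ s, |f i - g i|) := by
          refine add_le_add (mul_le_mul_of_nonneg_left hprodf (abs_nonneg _)) ?_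
          exact mul_le_mul (hg a) ih (abs_nonneg _) hB0
      _ ≤ B ^ s.card * (|f a - g a| + ∑ i ∈ s, |f i - g i|) := by
          rcases s.eq_empty_or_nonempty with rfl | hs
          · simp [mul_comm]
          · have hc : s.card - 1 + 1 = s.card := Nat.succ_pred_eq_of_pos (Finset.card_pos.mpr hs)
            have : B * B ^ (s.card - 1) = B ^ s.card := by
              rw [← pow_succ', hc]
            rw [mul_add, ← mul_assoc, this]
            have hsum : (0:ℝ) ≤ ∑ i ∈ s, |f i - g i| :=
              Finset.sum_nonneg fun i _ => abs_nonneg _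
            nlinarith [mul_le_mul_of_nonneg_left hsum (pow_nonneg hB0 s.card)]

theorem jackson_lipschitz (d n : ℕ) (hd : 1 ≤ d) (hn : 1 ≤ n) :
    ∀ x ∈ torusSet d, ∀ y ∈ torusSet d,
      |(∏ i, jackson n (x i)) - ∏ i, jackson n (y i)|
        ≤ 3 * Real.pi * n ^ 2 * (3 * n / 2) ^ (d - 1) * Real.sqrt d * dtor x y := by
  intro x hx y hy
  have hnR : (0:ℝ) < n := by exact_mod_cast hn
  have hn1 : (1:ℝ) ≤ n := by exact_mod_cast hn
  have hB : (1:ℝ) ≤ 3 * n / 2 := by linarith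
  have hxm : ∀ i, x i ∈ Set.Ico (0:ℝ) 1 := fun i => hx i (Set.mem_univ i)
  have hym : ∀ i, y i ∈ Set.Ico (0:ℝ) 1 := fun i => hy i (Set.mem_univ i)
  have hcard : (Finset.univ : Finset (Fin d)).card = d := by simp
  have h1 := abs_prod_sub_prod_le Finset.univ (fun i => jackson n (x i))
    (fun i => jackson n (y i)) (3 * n / 2) hB
    (fun i => jackson_abs_le n hn (x i)) (fun i => jackson_abs_le n hn (y i))
  rw [hcard] at h1
  -- bound the sum of differences
  have h2 : ∑ i, |jackson n (x i) - jackson n (y i)|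
      ≤ 3 * Real.pi * (n : ℝ) ^ 2 * ∑ i, dtor1 (x i) (y i) := by
    rw [Finset.mul_sum]
    exact Finset.sum_le_sum fun i _ => jackson_lip_tor n hn (x i) (y i) (hxm i) (hym i)
  -- Cauchy-Schwarz
  have hd1 : ∀ i, 0 ≤ dtor1 (x i) (y i) := by
    intro i
    rw [dtor1]
    have h1i := (hxm i); have h2i := (hym i)
    have : |x i - y i| ≤ 1 := by
      rw [abs_le]; constructor <;> [linarith [h1i.1, h2i.2]; linarith [h1i.2, h2i.1]]
    exact le_min (abs_nonneg _) (by linarith)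
  have hCS : ∑ i, dtor1 (x i) (y i) ≤ Real.sqrt d * dtor x y := by
    have hsq := sq_sum_le_card_mul_sum_sq (s := (Finset.univ : Finset (Fin d)))
      (f := fun i => dtor1 (x i) (y i))
    rw [hcard] at hsq
    have hnn : 0 ≤ ∑ i, dtor1 (x i) (y i) := Finset.sum_nonneg fun i _ => hd1 i
    calc ∑ i, dtor1 (x i) (y i) = Real.sqrt ((∑ i, dtor1 (x i) (y i)) ^ 2) :=
          (Real.sqrt_sq hnn).symm
      _ ≤ Real.sqrt ((d : ℝ) * ∑ i, dtor1 (x i) (y i) ^ 2) := Real.sqrt_le_sqrt hsq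
      _ = Real.sqrt d * dtor x y := by
          rw [Real.sqrt_mul (Nat.cast_nonneg d), dtor]
  have hBpow : (0:ℝ) ≤ (3 * n / 2) ^ (d - 1) := by positivity
  calc |(∏ i, jackson n (x i)) - ∏ i, jackson n (y i)|
      ≤ (3 * n / 2) ^ (d - 1) * ∑ i, |jackson n (x i) - jackson n (y i)| := h1
    _ ≤ (3 * n / 2) ^ (d - 1) * (3 * Real.pi * (n : ℝ) ^ 2 * ∑ i, dtor1 (x i) (y i)) :=
        mul_le_mul_of_nonneg_left h2 hBpow
    _ ≤ (3 * n / 2) ^ (d - 1) * (3 * Real.pi * (n : ℝ) ^ 2 * (Real.sqrt d * dtor x y)) := by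
        refine mul_le_mul_of_nonneg_left ?_ hBpow
        exact mul_le_mul_of_nonneg_left hCS (by positivity)
    _ = 3 * Real.pi * n ^ 2 * (3 * n / 2) ^ (d - 1) * Real.sqrt d * dtor x y := by ring
end

section
/- Let B(x) = Σ_{j=0}^n b_j x^j be a polynomial with complex coefficients satisfying |b_j| ≤ 1 for all j, and suppose B has a root of multiplicity at least k at x = 1. Then sup_{x ∈ [1 − k/(9n), 1]} |B(x)| ≤ (n+1)·(e/9)^k. -/
open Polynomial Real

private lemma bek_sum_choose_aux (m n : ℕ) :
    ∑ j ∈ Finset.range (n + 1), j.choose m = (n + 1).choose (m + 1) := by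
  induction n with
  | zero =>
    rcases m with _ | m
    · simp
    · simp [Nat.choose_eq_zero_of_lt (by omega : 1 < m + 2)]
  | succ n ih =>
    rw [Finset.sum_range_succ, ih, Nat.choose_succ_succ (n + 1) m, Nat.add_comm]

private lemma bek_pow_le_factorial_mul_exp (k : ℕ) :
    (k : ℝ) ^ k ≤ (k.factorial : ℝ) * Real.exp 1 ^ k := by
  have h := Real.sum_le_exp_of_nonneg (x := (k : ℝ)) (Nat.cast_nonneg k) (k + 1)
  have hterm : (k : ℝ) ^ k / k.factorial ≤ Real.exp k := by
    refine le_trans ?_ h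
    have := Finset.single_le_sum (f := fun i => (k : ℝ) ^ i / i.factorial)
      (fun i _ => by positivity) (Finset.self_mem_range_succ k)
    simpa using this
  have hexp : Real.exp (k : ℝ) = Real.exp 1 ^ k := by
    rw [← Real.exp_nat_mul, mul_one]
  rw [div_le_iff₀ (by positivity : (0:ℝ) < k.factorial)] at hterm
  rw [hexp] at hterm
  linarith [hterm]

private lemma bek_geom_aux (N : ℕ) : ∑ i ∈ Finset.range N, ((1 : ℝ) / 9) ^ i ≤ 9 / 8 := by
  rw [geom_sum_eq (by norm_num : (1 : ℝ) / 9 ≠ 1)]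
  rw [div_le_iff_of_neg (by norm_num : (1 : ℝ) / 9 - 1 < 0)]
  have := pow_nonneg (by norm_num : (0:ℝ) ≤ 1 / 9) N
  linarith

private lemma bek_key_sum (n k : ℕ) (hk : 1 ≤ k) (hkn : k ≤ n) (t : ℝ) (ht0 : 0 ≤ t)
    (ht : t ≤ (k : ℝ) / (9 * n)) :
    ∑ m ∈ Finset.Ico k (n + 1), ((n + 1).choose (m + 1) : ℝ) * t ^ m ≤
      ((n : ℝ) + 1) * (Real.exp 1 / 9) ^ k := by
  have hn : 1 ≤ n := hk.trans hkn
  have hn0 : (0 : ℝ) < n := by exact_mod_cast hn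
  set u : ℕ → ℝ := fun m => ((n + 1).choose (m + 1) : ℝ) * t ^ m with hu
  have hunn : ∀ m, 0 ≤ u m := fun m => by positivity
  -- ratio bound
  have hratio : ∀ m, k ≤ m → u (m + 1) ≤ (1 / 9) * u m := by
    intro m hm
    have hcc : ((n + 1).choose (m + 2) : ℝ) * ((m : ℝ) + 2) =
        ((n + 1).choose (m + 1) : ℝ) * ((n - m : ℕ) : ℝ) := by
      have h := Nat.choose_succ_right_eq (n + 1) (m + 1)
      rw [Nat.succ_sub_succ] at h
      exact_mod_cast congrArg (Nat.cast : ℕ → ℝ) h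
    have hd : ((n - m : ℕ) : ℝ) ≤ (n : ℝ) := by exact_mod_cast Nat.sub_le n m
    have hkm : (k : ℝ) ≤ (m : ℝ) := by exact_mod_cast hm
    have hnt : 9 * (n : ℝ) * t ≤ (k : ℝ) := by
      have h1 : 9 * (n : ℝ) * ((k : ℝ) / (9 * n)) = k := by field_simp
      nlinarith
    have h9 : ((n - m : ℕ) : ℝ) * t ≤ ((m : ℝ) + 2) / 9 := by
      have h2 : ((n - m : ℕ) : ℝ) * t ≤ (n : ℝ) * t :=
        mul_le_mul_of_nonneg_right hd ht0
      nlinarith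
    have hpos : (0 : ℝ) < (m : ℝ) + 2 := by positivity
    have hCm : (0 : ℝ) ≤ ((n + 1).choose (m + 1) : ℝ) := by positivity
    have htp : (0 : ℝ) ≤ t ^ m := by positivity
    refine le_of_mul_le_mul_left ?_ hpos
    calc ((m : ℝ) + 2) * u (m + 1)
        = (((n + 1).choose (m + 2) : ℝ) * ((m : ℝ) + 2)) * t ^ (m + 1) := by
          simp only [hu]; ring
      _ = (((n + 1).choose (m + 1) : ℝ) * (((n - m : ℕ) : ℝ) * t)) * t ^ m := by
          rw [hcc, pow_succ]; ring
      _ ≤ (((n + 1).choose (m + 1) : ℝ) * (((m : ℝ) + 2) / 9)) * t ^ m := by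
          apply mul_le_mul_of_nonneg_right _ htp
          exact mul_le_mul_of_nonneg_left h9 hCm
      _ = ((m : ℝ) + 2) * ((1 / 9) * u m) := by simp only [hu]; ring
  -- decay
  have hdecay : ∀ i, u (k + i) ≤ (1 / 9 : ℝ) ^ i * u k := by
    intro i
    induction i with
    | zero => simp
    | succ i ih =>
      calc u (k + i + 1) ≤ (1 / 9) * u (k + i) := hratio _ (Nat.le_add_right k i)
        _ ≤ (1 / 9) * ((1 / 9 : ℝ) ^ i * u k) := by
            apply mul_le_mul_of_nonneg_left ih (by norm_num)
        _ = (1 / 9 : ℝ) ^ (i + 1) * u k := by ring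
  -- sum bound
  have hsum : ∑ m ∈ Finset.Ico k (n + 1), u m ≤ (9 / 8) * u k := by
    rw [Finset.sum_Ico_eq_sum_range]
    calc ∑ i ∈ Finset.range (n + 1 - k), u (k + i)
        ≤ ∑ i ∈ Finset.range (n + 1 - k), (1 / 9 : ℝ) ^ i * u k :=
          Finset.sum_le_sum fun i _ => hdecay i
      _ = (∑ i ∈ Finset.range (n + 1 - k), (1 / 9 : ℝ) ^ i) * u k := by
          rw [Finset.sum_mul]
      _ ≤ (9 / 8) * u k :=
          mul_le_mul_of_nonneg_right (bek_geom_aux _) (hunn k)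
  -- bound on u k
  have hukey : u k ≤ (8 / 9) * (((n : ℝ) + 1) * (Real.exp 1 / 9) ^ k) := by
    have htk : t ^ k ≤ ((k : ℝ) / (9 * n)) ^ k := pow_le_pow_left₀ ht0 ht k
    have h1 : u k ≤ ((n + 1).choose (k + 1) : ℝ) * ((k : ℝ) / (9 * n)) ^ k :=
      mul_le_mul_of_nonneg_left htk (by positivity)
    refine h1.trans ?_
    set C : ℝ := ((n + 1).choose (k + 1) : ℝ) with hC
    set Cnk : ℝ := ((n).choose k : ℝ) with hCnk
    set E : ℝ := Real.exp 1 with hE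
    have hE0 : (0 : ℝ) < E := Real.exp_pos 1
    have h2 : C * ((k : ℝ) + 1) = ((n : ℝ) + 1) * Cnk := by
      have h := congrArg (Nat.cast : ℕ → ℝ) (Nat.add_one_mul_choose_eq n k)
      push_cast at h
      rw [hC, hCnk]
      linarith
    have h3 : Cnk * (k.factorial : ℝ) ≤ (n : ℝ) ^ k := by
      have hdf : n.descFactorial k ≤ n ^ k := Nat.descFactorial_le_pow n k
      have heq : n.descFactorial k = k.factorial * n.choose k :=
        Nat.descFactorial_eq_factorial_mul_choose n k
      rw [heq] at hdf
      calc Cnk * (k.factorial : ℝ) = ((k.factorial * n.choose k : ℕ) : ℝ) := by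
            push_cast; ring
        _ ≤ ((n ^ k : ℕ) : ℝ) := by exact_mod_cast hdf
        _ = (n : ℝ) ^ k := by push_cast; ring
    have h4 : (k : ℝ) ^ k ≤ (k.factorial : ℝ) * E ^ k := bek_pow_le_factorial_mul_exp k
    have hfac : (0 : ℝ) < (k.factorial : ℝ) := by positivity
    have hk1 : (2 : ℝ) ≤ (k : ℝ) + 1 := by
      have : (1 : ℝ) ≤ (k : ℝ) := by exact_mod_cast hk
      linarith
    -- reduce to polynomial inequality
    have hpow : ((k : ℝ) / (9 * n)) ^ k = (k : ℝ) ^ k / (9 * n) ^ k := div_pow _ _ _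
    rw [hpow, mul_div_assoc', div_le_iff₀ (by positivity : (0:ℝ) < (9 * (n:ℝ)) ^ k)]
    have hrhs : (8 / 9) * (((n : ℝ) + 1) * (E / 9) ^ k) * (9 * (n : ℝ)) ^ k =
        (8 / 9) * (((n : ℝ) + 1) * (E ^ k * (n : ℝ) ^ k)) := by
      rw [div_pow, mul_pow]
      field_simp
    rw [hrhs]
    -- now: C * k^k ≤ (8/9) * ((n+1) * (E^k * n^k))
    have hCnn : (0 : ℝ) ≤ C := by positivity
    have hCnknn : (0 : ℝ) ≤ Cnk := by positivity
    have hEk : (0 : ℝ) ≤ E ^ k := by positivity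
    have hnk : (0 : ℝ) ≤ (n : ℝ) ^ k := by positivity
    have hkk : (0 : ℝ) ≤ (k : ℝ) ^ k := by positivity
    have hA : ((n : ℝ) + 1) * Cnk * (k : ℝ) ^ k ≤
        ((n : ℝ) + 1) * Cnk * ((k.factorial : ℝ) * E ^ k) := by
      apply mul_le_mul_of_nonneg_left h4
      positivity
    have hB : ((n : ℝ) + 1) * (Cnk * (k.factorial : ℝ)) * E ^ k ≤
        ((n : ℝ) + 1) * (n : ℝ) ^ k * E ^ k := by
      apply mul_le_mul_of_nonneg_right _ hEk
      apply mul_le_mul_of_nonneg_left h3 (by positivity)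
    have hmain : C * (k : ℝ) ^ k * ((k : ℝ) + 1) ≤ ((n : ℝ) + 1) * (n : ℝ) ^ k * E ^ k := by
      calc C * (k : ℝ) ^ k * ((k : ℝ) + 1) = (C * ((k : ℝ) + 1)) * (k : ℝ) ^ k := by ring
        _ = ((n : ℝ) + 1) * Cnk * (k : ℝ) ^ k := by rw [h2]
        _ ≤ ((n : ℝ) + 1) * Cnk * ((k.factorial : ℝ) * E ^ k) := hA
        _ = ((n : ℝ) + 1) * (Cnk * (k.factorial : ℝ)) * E ^ k := by ring
        _ ≤ ((n : ℝ) + 1) * (n : ℝ) ^ k * E ^ k := hB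
    nlinarith [mul_nonneg hCnn hkk]
  calc ∑ m ∈ Finset.Ico k (n + 1), ((n + 1).choose (m + 1) : ℝ) * t ^ m
      = ∑ m ∈ Finset.Ico k (n + 1), u m := rfl
    _ ≤ (9 / 8) * u k := hsum
    _ ≤ (9 / 8) * ((8 / 9) * (((n : ℝ) + 1) * (Real.exp 1 / 9) ^ k)) :=
        mul_le_mul_of_nonneg_left hukey (by norm_num)
    _ = ((n : ℝ) + 1) * (Real.exp 1 / 9) ^ k := by ring

theorem bek_bounded_coeffs_repeated_roots (n k : ℕ) (hn : 1 ≤ n) (b : ℕ → ℂ)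
    (hb : ∀ j ≤ n, ‖b j‖ ≤ 1)
    (P : Polynomial ℂ)
    (hP : P = ∑ j ∈ Finset.range (n + 1), Polynomial.C (b j) * Polynomial.X ^ j)
    (hroot : (Polynomial.X - 1) ^ k ∣ P) :
    ∀ x : ℝ, 1 - (k : ℝ) / (9 * n) ≤ x → x ≤ 1 →
      ‖P.eval (x : ℂ)‖ ≤ (n + 1) * (Real.exp 1 / 9) ^ k := by
  intro x hx1 hx2
  have hn0 : (0 : ℝ) < (n : ℝ) := by exact_mod_cast hn
  have hdeg : P.natDegree ≤ n := by
    rw [hP]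
    apply Polynomial.natDegree_sum_le_of_forall_le
    intro j hj
    refine (Polynomial.natDegree_C_mul_le _ _).trans ?_
    rw [Polynomial.natDegree_X_pow]
    exact Nat.lt_succ_iff.mp (Finset.mem_range.mp hj)
  rcases Nat.eq_zero_or_pos k with hk0 | hk1
  · subst hk0
    have hx : x = 1 := le_antisymm hx2 (by simpa using hx1)
    subst hx
    rw [hP]
    simp only [Polynomial.eval_finset_sum, Polynomial.eval_mul, Polynomial.eval_C,
      Polynomial.eval_pow, Polynomial.eval_X, Complex.ofReal_one, one_pow, mul_one, pow_zero]
    calc ‖∑ j ∈ Finset.range (n + 1), b j‖ ≤ ∑ j ∈ Finset.range (n + 1), ‖b j‖ :=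
          norm_sum_le _ _
      _ ≤ ∑ j ∈ Finset.range (n + 1), 1 :=
          Finset.sum_le_sum fun j hj => hb j (Nat.lt_succ_iff.mp (Finset.mem_range.mp hj))
      _ = (n : ℝ) + 1 := by simp
  rcases le_or_gt k n with hkn | hnk
  swap
  · have hP0 : P = 0 := by
      by_contra h
      have hle := Polynomial.natDegree_le_of_dvd hroot h
      rw [Polynomial.natDegree_pow] at hle
      have h1 : ((Polynomial.X : Polynomial ℂ) - 1).natDegree = 1 := by
        rw [show ((Polynomial.X : Polynomial ℂ) - 1) = Polynomial.X - Polynomial.C 1 by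
          rw [Polynomial.C_1]]
        exact Polynomial.natDegree_X_sub_C 1
      rw [h1, mul_one] at hle
      omega
    rw [hP0]
    simp only [Polynomial.eval_zero, norm_zero]
    positivity
  obtain ⟨Q, hQ⟩ := hroot
  have htay : Polynomial.taylor 1 P = Polynomial.X ^ k * Polynomial.taylor 1 Q := by
    rw [hQ, Polynomial.taylor_apply, Polynomial.mul_comp, Polynomial.pow_comp,
      Polynomial.sub_comp, Polynomial.X_comp, Polynomial.one_comp, ← Polynomial.taylor_apply]
    have hX : (Polynomial.X + Polynomial.C (1 : ℂ) - 1) = Polynomial.X := by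
      rw [Polynomial.C_1]; ring
    rw [hX]
  have ha0 : ∀ m < k, (Polynomial.taylor 1 P).coeff m = 0 := by
    intro m hm
    rw [htay, Polynomial.coeff_X_pow_mul', if_neg (by omega)]
  have hcoeff : ∀ m, (Polynomial.taylor 1 P).coeff m
      = ∑ j ∈ Finset.range (n + 1), (j.choose m : ℂ) * b j := by
    intro m
    rw [Polynomial.taylor_coeff, hP, map_sum, Polynomial.eval_finset_sum]
    refine Finset.sum_congr rfl fun j _ => ?_
    rw [Polynomial.C_mul_X_pow_eq_monomial, Polynomial.hasseDeriv_monomial,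
      Polynomial.eval_monomial, one_pow, mul_one]
  have hanorm : ∀ m, ‖(Polynomial.taylor 1 P).coeff m‖ ≤ ((n + 1).choose (m + 1) : ℝ) := by
    intro m
    rw [hcoeff m]
    calc ‖∑ j ∈ Finset.range (n + 1), (j.choose m : ℂ) * b j‖
        ≤ ∑ j ∈ Finset.range (n + 1), ‖(j.choose m : ℂ) * b j‖ := norm_sum_le _ _
      _ ≤ ∑ j ∈ Finset.range (n + 1), ((j.choose m : ℕ) : ℝ) := by
          refine Finset.sum_le_sum fun j hj => ?_
          rw [norm_mul]
          have h1 : ‖((j.choose m : ℕ) : ℂ)‖ = ((j.choose m : ℕ) : ℝ) := by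
            simp
          rw [h1]
          have h2 := hb j (Nat.lt_succ_iff.mp (Finset.mem_range.mp hj))
          have h3 : (0 : ℝ) ≤ ((j.choose m : ℕ) : ℝ) := Nat.cast_nonneg _
          nlinarith [norm_nonneg (b j)]
      _ = ((n + 1).choose (m + 1) : ℝ) := by
          rw [← Nat.cast_sum, bek_sum_choose_aux]
  set t : ℝ := 1 - x with htdef
  have ht0 : 0 ≤ t := by rw [htdef]; linarith
  have ht : t ≤ (k : ℝ) / (9 * n) := by rw [htdef]; linarith
  have hnx : ‖(x : ℂ) - 1‖ = t := by
    have hcast : ((x : ℂ) - 1) = ((x - 1 : ℝ) : ℂ) := by push_cast; ring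
    rw [hcast, Complex.norm_real, Real.norm_eq_abs, abs_of_nonpos (by linarith), htdef]
    ring
  have heval : P.eval (x : ℂ) = ∑ m ∈ Finset.range (n + 1),
      (Polynomial.taylor 1 P).coeff m * ((x : ℂ) - 1) ^ m := by
    conv_lhs => rw [← Polynomial.taylor_eval_sub (1 : ℂ) P (x : ℂ)]
    rw [Polynomial.eval_eq_sum_range' (n := n + 1)
      (by rw [Polynomial.natDegree_taylor]; omega) ((x : ℂ) - 1)]
  rw [heval]
  calc ‖∑ m ∈ Finset.range (n + 1), (Polynomial.taylor 1 P).coeff m * ((x : ℂ) - 1) ^ m‖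
      ≤ ∑ m ∈ Finset.range (n + 1), ‖(Polynomial.taylor 1 P).coeff m‖ * t ^ m := by
        refine (norm_sum_le _ _).trans (Finset.sum_le_sum fun m _ => ?_)
        rw [norm_mul, norm_pow, hnx]
    _ = ∑ m ∈ Finset.Ico k (n + 1), ‖(Polynomial.taylor 1 P).coeff m‖ * t ^ m := by
        refine (Finset.sum_subset ?_ ?_).symm
        · intro m hm
          simp only [Finset.mem_Ico] at hm
          simp only [Finset.mem_range]
          omega
        · intro m hm1 hm2
          simp only [Finset.mem_range] at hm1
          simp only [Finset.mem_Ico] at hm2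
          rw [ha0 m (by omega), norm_zero, zero_mul]
    _ ≤ ∑ m ∈ Finset.Ico k (n + 1), ((n + 1).choose (m + 1) : ℝ) * t ^ m :=
        Finset.sum_le_sum fun m _ =>
          mul_le_mul_of_nonneg_right (hanorm m) (by positivity)
    _ ≤ ((n : ℝ) + 1) * (Real.exp 1 / 9) ^ k := bek_key_sum n k hk1 hkn t ht0 ht
end

section
/- Let d ≥ 1 and 2^{−d/3} < ε < 1/170, and set γ = 8 ln(1/ε)/d. Then 2^{−d} Σ_{j=1}^{d} (1 + e^{−jγ})^d ≤ ε/2. -/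
open Real Finset

lemma exp_three_half_lb : (4.4816:ℝ) ≤ Real.exp (3/2) := by
  have h1 : (2.7182818283:ℝ) < Real.exp 1 := Real.exp_one_gt_d9
  have h3 : Real.exp (3:ℝ) = Real.exp 1 ^ 3 := by
    rw [← Real.exp_nat_mul]; norm_num
  have h2 : Real.exp (3/2:ℝ) ^ 2 = Real.exp 3 := by
    rw [← Real.exp_nat_mul]; norm_num
  have hc : (2.7182818283:ℝ)^3 ≤ Real.exp 1 ^ 3 :=
    pow_le_pow_left₀ (by norm_num) h1.le 3
  have hkey : (4.4816:ℝ)^2 ≤ Real.exp (3/2) ^ 2 := by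
    rw [h2, h3]; nlinarith
  have hpos := Real.exp_pos (3/2:ℝ)
  nlinarith

lemma exp_neg_three_half_ub : Real.exp (-(3/2)) ≤ (0.22314:ℝ) := by
  have h := exp_three_half_lb
  rw [Real.exp_neg, inv_le_comm₀ (Real.exp_pos _) (by norm_num)]
  linarith

lemma exp_three_eighth_ub : Real.exp (3/8:ℝ) ≤ 5/3 := by
  have h1 : Real.exp 1 < 2.7182818286 := Real.exp_one_lt_d9
  have h8 : Real.exp (3/8:ℝ) ^ 8 = Real.exp 1 ^ 3 := by
    rw [← Real.exp_nat_mul, ← Real.exp_nat_mul]; norm_num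
  have hc : Real.exp 1 ^ 3 ≤ (2.7182818286:ℝ)^3 :=
    pow_le_pow_left₀ (Real.exp_pos 1).le h1.le 3
  have : Real.exp (3/8:ℝ) ^ 8 ≤ (5/3:ℝ)^8 := by
    rw [h8]; nlinarith
  exact le_of_pow_le_pow_left₀ (by norm_num) (by norm_num) this

lemma head_ineq {x : ℝ} (hx0 : 0 ≤ x) (hx : x ≤ 3/2) :
    1 + Real.exp (-x) ≤ 2 * Real.exp (-x/4) := by
  set u := Real.exp (-x/4) with hu
  have hu4 : Real.exp (-x) = u^4 := by
    rw [hu, ← Real.exp_nat_mul]; ring_nf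
  have hub : u ≤ 1 := Real.exp_le_one_iff.mpr (by linarith)
  have hlb : (3/5:ℝ) ≤ u := by
    have h1 : Real.exp (-(3/8:ℝ)) ≤ u := Real.exp_le_exp.mpr (by linarith)
    have h2 : (3/5:ℝ) ≤ Real.exp (-(3/8:ℝ)) := by
      rw [Real.exp_neg, le_inv_comm₀ (by norm_num) (Real.exp_pos _)]
      calc Real.exp (3/8:ℝ) ≤ 5/3 := exp_three_eighth_ub
        _ ≤ (3/5:ℝ)⁻¹ := by norm_num
    linarith
  rw [hu4]
  nlinarith [sq_nonneg u, sq_nonneg (u-1), sq_nonneg (u+1),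
    mul_nonneg (sub_nonneg.mpr hlb) (sub_nonneg.mpr hub)]

lemma pow_1297 (n : ℕ) (hn : 23 ≤ n) : (4*n : ℝ) ≤ (1.297:ℝ)^n := by
  induction n with
  | zero => omega
  | succ m ih =>
    rcases Nat.lt_or_ge m 23 with h | h
    · have hm : m = 22 := by omega
      subst hm
      norm_num
    · have h1 := ih h
      have hm : (23:ℝ) ≤ m := by exact_mod_cast h
      have he : (1.297:ℝ)^(m+1) = 1.297 * 1.297^m := by ring
      rw [he]
      push_cast
      nlinarith

lemma s_lb : (0.7936:ℝ) ≤ (2:ℝ)^(-(1:ℝ)/3) := by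
  have hs : ((2:ℝ)^(-(1:ℝ)/3))^(3:ℕ) = 1/2 := by
    rw [← Real.rpow_natCast ((2:ℝ)^(-(1:ℝ)/3)) 3, ← Real.rpow_mul (by norm_num)]
    norm_num
  have hpos : (0:ℝ) < (2:ℝ)^(-(1:ℝ)/3) := Real.rpow_pos_of_pos (by norm_num) _
  have : (0.7936:ℝ)^(3:ℕ) ≤ ((2:ℝ)^(-(1:ℝ)/3))^(3:ℕ) := by rw [hs]; norm_num
  exact le_of_pow_le_pow_left₀ (by norm_num) hpos.le this

lemma d_ge_23 (d : ℕ) (h : (2:ℝ)^(-(d:ℝ)/3) < 1/170) : 23 ≤ d := by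
  by_contra hlt
  push_neg at hlt
  have hd : (d:ℝ) ≤ 22 := by exact_mod_cast Nat.le_of_lt_succ hlt
  have h1 : (2:ℝ)^((d:ℝ)/3) ≤ (2:ℝ)^((22:ℝ)/3) :=
    Real.rpow_le_rpow_of_exponent_le (by norm_num) (by linarith)
  have h2 : ((2:ℝ)^((22:ℝ)/3))^(3:ℕ) ≤ (170:ℝ)^(3:ℕ) := by
    rw [← Real.rpow_natCast ((2:ℝ)^((22:ℝ)/3)) 3, ← Real.rpow_mul (by norm_num)]
    rw [show ((22:ℝ)/3*(3:ℕ)) = ((22:ℕ):ℝ) by push_cast; ring, Real.rpow_natCast]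
    norm_num
  have h3 : (2:ℝ)^((22:ℝ)/3) ≤ 170 := by
    refine le_of_pow_le_pow_left₀ (by norm_num) (by norm_num) h2
  have h4 : (2:ℝ)^(-(d:ℝ)/3) = ((2:ℝ)^((d:ℝ)/3))⁻¹ := by
    rw [← Real.rpow_neg (by norm_num)]; ring_nf
  rw [h4] at h
  have h5 : (170:ℝ) < (2:ℝ)^((d:ℝ)/3) := by
    have hp : (0:ℝ) < (2:ℝ)^((d:ℝ)/3) := Real.rpow_pos_of_pos (by norm_num) _
    by_contra hc
    push_neg at hc
    have := inv_anti₀ hp hc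
    rw [one_div] at h
    linarith
  linarith

theorem mixture_mass_estimate (d : ℕ) (hd : 1 ≤ d) (ε γ : ℝ)
    (hεlb : (2 : ℝ) ^ (-(d : ℝ) / 3) < ε) (hεub : ε < 1 / 170)
    (hγ : γ = 8 * Real.log (1 / ε) / d) :
    (2 : ℝ) ^ (-(d : ℝ)) * ∑ j ∈ Finset.Icc 1 d, (1 + Real.exp (-(j * γ))) ^ d ≤ ε / 2 := by
  have hε0 : 0 < ε := lt_trans (Real.rpow_pos_of_pos (by norm_num) _) hεlb
  have hε8 : ε ≤ 1/8 := by linarith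
  have hd0 : (0:ℝ) < d := by exact_mod_cast Nat.lt_of_lt_of_le Nat.zero_lt_one hd
  have hL : 0 < Real.log (1/ε) := Real.log_pos (by rw [lt_div_iff₀ hε0]; linarith)
  have hγ0 : 0 < γ := by rw [hγ]; positivity
  have hd23 : 23 ≤ d := d_ge_23 d (lt_trans hεlb hεub)
  set C : ℝ := (1 + Real.exp (-(3/2:ℝ)))^d with hC
  -- per-term bound
  have hterm : ∀ j ∈ Finset.Icc 1 d,
      (1 + Real.exp (-((j:ℝ)*γ)))^d ≤ 2^d * ε^(2*j) + C := by
    intro j hj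
    have hj1 : 1 ≤ j := (Finset.mem_Icc.mp hj).1
    have hj1' : (1:ℝ) ≤ j := by exact_mod_cast hj1
    have hjγ0 : 0 ≤ (j:ℝ)*γ := by positivity
    have hbase : (0:ℝ) ≤ 1 + Real.exp (-((j:ℝ)*γ)) := by positivity
    by_cases hc : (j:ℝ)*γ ≤ 3/2
    · have h1 : (1 + Real.exp (-((j:ℝ)*γ)))^d ≤ (2 * Real.exp (-((j:ℝ)*γ)/4))^d :=
        pow_le_pow_left₀ hbase (head_ineq hjγ0 hc) d
      have hexp : Real.exp (-((j:ℝ)*γ)/4)^d = ε^(2*j) := by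
        rw [← Real.exp_nat_mul]
        have hγd : γ * d = 8 * Real.log (1/ε) := by
          rw [hγ]; field_simp
        have harg : (d:ℝ) * (-((j:ℝ)*γ)/4) = ((2*j : ℕ):ℝ) * Real.log ε := by
          have hlog : Real.log (1/ε) = -Real.log ε := by
            rw [one_div, Real.log_inv]
          push_cast
          nlinarith [hγd, hlog]
        rw [harg, Real.exp_nat_mul, Real.exp_log hε0]
      have h2 : (2 * Real.exp (-((j:ℝ)*γ)/4))^d = 2^d * ε^(2*j) := by
        rw [mul_pow, hexp]
      have hCpos : (0:ℝ) ≤ C := by positivity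
      calc (1 + Real.exp (-((j:ℝ)*γ)))^d ≤ 2^d * ε^(2*j) := by rw [← h2]; exact h1
        _ ≤ 2^d * ε^(2*j) + C := by linarith
    · push_neg at hc
      have h1 : Real.exp (-((j:ℝ)*γ)) ≤ Real.exp (-(3/2)) :=
        Real.exp_le_exp.mpr (by linarith)
      have h2 : (1 + Real.exp (-((j:ℝ)*γ)))^d ≤ C :=
        pow_le_pow_left₀ hbase (by linarith) d
      have h3 : (0:ℝ) ≤ 2^d * ε^(2*j) := by positivity
      linarith
  -- sum the bound
  have hsum : ∑ j ∈ Finset.Icc 1 d, (1 + Real.exp (-((j:ℝ)*γ)))^d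
      ≤ 2^d * (∑ j ∈ Finset.Icc 1 d, ε^(2*j)) + d * C := by
    calc ∑ j ∈ Finset.Icc 1 d, (1 + Real.exp (-((j:ℝ)*γ)))^d
        ≤ ∑ j ∈ Finset.Icc 1 d, (2^d * ε^(2*j) + C) := Finset.sum_le_sum hterm
      _ = 2^d * (∑ j ∈ Finset.Icc 1 d, ε^(2*j)) + d * C := by
          rw [Finset.sum_add_distrib, Finset.sum_const, Nat.card_Icc, ← Finset.mul_sum]
          simp [nsmul_eq_mul]
  -- part A
  have hA : ∑ j ∈ Finset.Icc 1 d, ε^(2*j) ≤ ε/4 := by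
    have hre : ∑ j ∈ Finset.Icc 1 d, ε^(2*j) = ∑ i ∈ Finset.range d, ε^(2*(1+i)) := by
      rw [← Finset.Ico_add_one_right_eq_Icc, Finset.sum_Ico_eq_sum_range]
      simp
    rw [hre]
    have hbd : ∀ i ∈ Finset.range d, ε^(2*(1+i)) ≤ ε^2 * (1/2:ℝ)^i := by
      intro i _
      have : ε^(2*(1+i)) = ε^2 * (ε^2)^i := by
        rw [← pow_mul]; ring
      rw [this]
      have h2 : (ε^2)^i ≤ ((1/2:ℝ))^i := pow_le_pow_left₀ (sq_nonneg ε) (by nlinarith) i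
      nlinarith [sq_nonneg ε, pow_nonneg (sq_nonneg ε) i]
    calc ∑ i ∈ Finset.range d, ε^(2*(1+i)) ≤ ∑ i ∈ Finset.range d, ε^2 * (1/2:ℝ)^i :=
          Finset.sum_le_sum hbd
      _ = ε^2 * ∑ i ∈ Finset.range d, (1/2:ℝ)^i := by rw [← Finset.mul_sum]
      _ ≤ ε^2 * 2 := by
          have := sum_geometric_two_le d
          nlinarith [sq_nonneg ε]
      _ ≤ ε/4 := by nlinarith
  -- part B
  have hB : (d:ℝ) * C * ((2:ℝ)^d)⁻¹ ≤ ε/4 := by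
    set c : ℝ := (1 + Real.exp (-(3/2:ℝ)))/2 with hc
    have hc0 : 0 ≤ c := by positivity
    have hcC : C * ((2:ℝ)^d)⁻¹ = c^d := by
      rw [hC, hc, div_pow]; ring
    have hc1 : 1.297 * c ≤ (2:ℝ)^(-(1:ℝ)/3) := by
      have := exp_neg_three_half_ub
      have := s_lb
      rw [hc]
      nlinarith
    have hsd : ((2:ℝ)^(-(1:ℝ)/3))^d = (2:ℝ)^(-(d:ℝ)/3) := by
      rw [← Real.rpow_natCast ((2:ℝ)^(-(1:ℝ)/3)) d, ← Real.rpow_mul (by norm_num)]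
      ring_nf
    have hchain : 4 * (d:ℝ) * c^d ≤ ε := by
      have h1 : 4 * (d:ℝ) * c^d ≤ (1.297:ℝ)^d * c^d :=
        mul_le_mul_of_nonneg_right (pow_1297 d hd23) (pow_nonneg hc0 d)
      have h2 : (1.297:ℝ)^d * c^d = (1.297 * c)^d := (mul_pow _ _ _).symm
      have h3 : (1.297 * c)^d ≤ ((2:ℝ)^(-(1:ℝ)/3))^d :=
        pow_le_pow_left₀ (by positivity) hc1 d
      have h4 : ((2:ℝ)^(-(1:ℝ)/3))^d ≤ ε := by rw [hsd]; exact hεlb.le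
      linarith
    calc (d:ℝ) * C * ((2:ℝ)^d)⁻¹ = (d:ℝ) * c^d := by rw [mul_assoc, hcC]
      _ ≤ ε/4 := by linarith
  -- assemble
  have h2d : (2:ℝ)^(-(d:ℝ)) = ((2:ℝ)^d)⁻¹ := by
    rw [Real.rpow_neg (by norm_num), Real.rpow_natCast]
  rw [h2d]
  have hpow : (0:ℝ) < (2:ℝ)^d := by positivity
  have hfinal : ((2:ℝ)^d)⁻¹ * ∑ j ∈ Finset.Icc 1 d, (1 + Real.exp (-((j:ℝ)*γ)))^d
      ≤ ((2:ℝ)^d)⁻¹ * (2^d * (∑ j ∈ Finset.Icc 1 d, ε^(2*j)) + d * C) :=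
    mul_le_mul_of_nonneg_left hsum (by positivity)
  have heq : ((2:ℝ)^d)⁻¹ * (2^d * (∑ j ∈ Finset.Icc 1 d, ε^(2*j)) + d * C)
      = (∑ j ∈ Finset.Icc 1 d, ε^(2*j)) + (d:ℝ) * C * ((2:ℝ)^d)⁻¹ := by
    field_simp
  rw [heq] at hfinal
  calc ((2:ℝ)^d)⁻¹ * ∑ j ∈ Finset.Icc 1 d, (1 + Real.exp (-((j:ℝ)*γ)))^d
      ≤ (∑ j ∈ Finset.Icc 1 d, ε^(2*j)) + (d:ℝ) * C * ((2:ℝ)^d)⁻¹ := hfinal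
    _ ≤ ε/4 + ε/4 := add_le_add hA hB
    _ = ε/2 := by ring
end
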